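/- arXiv:1711.00131 — 2 statements merged into one kernel-verified Lean document; each statement's English description precedes it below -/
import Mathlib

section
/- Let ȳ_A⁰, ȳ_A¹, ȳ_B⁰, ȳ_B¹ be positive real numbers with ȳ_A⁰ > ȳ_A¹, and set γ = log(ȳ_A⁰/ȳ_A¹), α = (1/γ)·log(ȳ_B¹/ȳ_B⁰), and β = (1/γ)·(ȳ_A⁰ + ȳ_B⁰ − ȳ_A¹ − ȳ_B¹). Then for all natural numbers y_A and y_B, the inequality f_P(y_A; ȳ_A⁰)·f_P(y_B; ȳ_B⁰) ≥ f_P(y_A; ȳ_A¹)·f_P(y_B; ȳ_B¹) holds if and only if (y_A : ℝ) ≥ α·(y_B : ℝ) + β. -/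
open Real

/-- Poisson probability mass function `f_P(y; λ) = λ^y e^{-λ} / y!`. -/
noncomputable def poissonPmf (lam : ℝ) (y : ℕ) : ℝ :=
  lam ^ y * Real.exp (-lam) / (Nat.factorial y : ℝ)

/-- Genie-aided ML detector (Proposition 1): the likelihood under hypothesis `0` dominates
that under hypothesis `1` iff `y_A ≥ α y_B + β`. -/
theorem genie_aided_ml_detector
    (yA0 yA1 yB0 yB1 : ℝ)
    (hA0 : 0 < yA0) (hA1 : 0 < yA1) (hB0 : 0 < yB0) (hB1 : 0 < yB1)
    (hAgt : yA0 > yA1)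
    (γ : ℝ) (hγ : γ = Real.log (yA0 / yA1))
    (α : ℝ) (hα : α = (1 / γ) * Real.log (yB1 / yB0))
    (β : ℝ) (hβ : β = (1 / γ) * (yA0 + yB0 - yA1 - yB1)) :
    ∀ yA yB : ℕ,
      poissonPmf yA0 yA * poissonPmf yB0 yB ≥ poissonPmf yA1 yA * poissonPmf yB1 yB ↔
        (yA : ℝ) ≥ α * (yB : ℝ) + β := by
  intro yA yB
  have hγpos : 0 < γ := by
    rw [hγ]
    exact Real.log_pos ((one_lt_div hA1).mpr hAgt)
  have hfA : (0:ℝ) < (Nat.factorial yA : ℝ) := by positivity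
  have hfB : (0:ℝ) < (Nat.factorial yB : ℝ) := by positivity
  have pos : ∀ (lam : ℝ), 0 < lam → ∀ y : ℕ, 0 < poissonPmf lam y := by
    intro lam hl y
    unfold poissonPmf
    positivity
  have logp : ∀ (lam : ℝ), 0 < lam → ∀ y : ℕ,
      Real.log (poissonPmf lam y) =
        (y : ℝ) * Real.log lam - lam - Real.log (Nat.factorial y : ℝ) := by
    intro lam hl y
    unfold poissonPmf
    rw [Real.log_div (by positivity) (by positivity),
      Real.log_mul (by positivity) (Real.exp_ne_zero _),
      Real.log_pow, Real.log_exp]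
    ring
  rw [ge_iff_le, ← Real.log_le_log_iff (mul_pos (pos _ hA1 yA) (pos _ hB1 yB))
      (mul_pos (pos _ hA0 yA) (pos _ hB0 yB)),
    Real.log_mul (ne_of_gt (pos _ hA0 yA)) (ne_of_gt (pos _ hB0 yB)),
    Real.log_mul (ne_of_gt (pos _ hA1 yA)) (ne_of_gt (pos _ hB1 yB)),
    logp _ hA0, logp _ hA1, logp _ hB0, logp _ hB1]
  have hA : Real.log yA0 - Real.log yA1 = γ := by
    rw [hγ, Real.log_div (ne_of_gt hA0) (ne_of_gt hA1)]
  have hB : Real.log yB1 - Real.log yB0 = γ * α := by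
    rw [hα, Real.log_div (ne_of_gt hB1) (ne_of_gt hB0)]
    field_simp
  have hβ' : yA0 + yB0 - yA1 - yB1 = γ * β := by
    rw [hβ]; field_simp
  constructor
  · intro h
    have key : γ * (α * yB + β) ≤ γ * yA := by nlinarith [h, hA, hB, hβ']
    exact le_of_mul_le_mul_left key hγpos
  · intro h
    nlinarith [mul_le_mul_of_nonneg_left h (le_of_lt hγpos), hA, hB, hβ']
end

section
/- Let D > 0, Δt > 0, and r > 0, and let x ∈ EuclideanSpace ℝ (Fin 3) with ‖x‖ = r. Let g : ℝ → ℝ be a measurable function such that y ↦ g(‖y‖)·exp(−‖x − y‖²/(4·D·Δt)) is integrable on EuclideanSpace ℝ (Fin 3). Then (4·π·D·Δt)^{−3/2} · ∫_{ℝ³} g(‖y‖) · exp(−‖x − y‖² / (4·D·Δt)) dy = (4·π·D·Δt)^{−1/2} · ∫_{r̃ ∈ (0,∞)} g(r̃) · (2·r̃/r) · exp(−(r̃² + r²)/(4·D·Δt)) · sinh(r·r̃/(2·D·Δt)) dr̃. -/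
open Real MeasureTheory
open Set

namespace GaussRadial

theorem lintegral_comp_polarCoord_symm (f : ℝ × ℝ → ENNReal) :
    (∫⁻ p in polarCoord.target, ENNReal.ofReal p.1 * f (polarCoord.symm p)) = ∫⁻ p, f p := by
  set B : ℝ × ℝ → ℝ × ℝ →L[ℝ] ℝ × ℝ := fun p =>
    LinearMap.toContinuousLinearMap (Matrix.toLin (Module.Basis.finTwoProd ℝ) (Module.Basis.finTwoProd ℝ)
      !![Real.cos p.2, -p.1 * Real.sin p.2; Real.sin p.2, p.1 * Real.cos p.2])
  have B_det : ∀ p, (B p).det = p.1 := by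
    intro p
    conv_rhs => rw [← one_mul p.1, ← cos_sq_add_sin_sq p.2]
    simp only [B, neg_mul, LinearMap.det_toContinuousLinearMap, LinearMap.det_toLin,
      Matrix.det_fin_two_of, sub_neg_eq_add]
    ring
  symm
  calc
    ∫⁻ p, f p = ∫⁻ p in polarCoord.source, f p := by
      rw [← setLIntegral_univ]
      exact (setLIntegral_congr polarCoord_source_ae_eq_univ.symm)
    _ = ∫⁻ p in polarCoord.target, ENNReal.ofReal |(B p).det| * f (polarCoord.symm p) := by
      rw [← polarCoord.symm_image_target_eq_source]
      exact lintegral_image_eq_lintegral_abs_det_fderiv_mul volume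
        polarCoord.open_target.measurableSet
        (fun p _ => (hasFDerivAt_polarCoord_symm p).hasFDerivWithinAt)
        polarCoord.symm.injOn f
    _ = _ := by
      refine setLIntegral_congr_fun polarCoord.open_target.measurableSet
        (fun p hp => ?_)
      rw [B_det, abs_of_pos hp.1]

theorem phi_image (t : ℝ) :
    (fun u => Real.sqrt (u ^ 2 - t ^ 2)) '' Ioi |t| = Ioi (0 : ℝ) := by
  ext y
  constructor
  · rintro ⟨u, hu, rfl⟩
    have h1 : t ^ 2 < u ^ 2 := by
      rw [← sq_abs t]
      exact pow_lt_pow_left₀ hu (abs_nonneg t) two_ne_zero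
    exact Real.sqrt_pos.2 (by linarith)
  · intro hy
    refine ⟨Real.sqrt (y ^ 2 + t ^ 2), ?_, ?_⟩
    · have h1 : |t| = Real.sqrt (t ^ 2) := (Real.sqrt_sq_eq_abs t).symm
      rw [mem_Ioi, h1]
      apply Real.sqrt_lt_sqrt (sq_nonneg t)
      have := mem_Ioi.1 hy
      nlinarith
    · show Real.sqrt (Real.sqrt (y ^ 2 + t ^ 2) ^ 2 - t ^ 2) = y
      rw [Real.sq_sqrt (by positivity), add_sub_cancel_right]
      exact Real.sqrt_sq (le_of_lt hy)

theorem phi_deriv (t : ℝ) {u : ℝ} (hu : u ∈ Ioi |t|) :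
    HasDerivWithinAt (fun u => Real.sqrt (u ^ 2 - t ^ 2))
      (u / Real.sqrt (u ^ 2 - t ^ 2)) (Ioi |t|) u := by
  have h1 : t ^ 2 < u ^ 2 := by
    rw [← sq_abs t]
    exact pow_lt_pow_left₀ hu (abs_nonneg t) two_ne_zero
  have h2 : u ^ 2 - t ^ 2 ≠ 0 := by linarith
  have h3 : HasDerivAt (fun u : ℝ => u ^ 2 - t ^ 2) (2 * u) u := by
    simpa using (hasDerivAt_pow 2 u).sub_const (t ^ 2)
  have h4 := (Real.hasDerivAt_sqrt h2).comp u h3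
  have h5 : 1 / (2 * Real.sqrt (u ^ 2 - t ^ 2)) * (2 * u) = u / Real.sqrt (u ^ 2 - t ^ 2) := by
    have : Real.sqrt (u ^ 2 - t ^ 2) ≠ 0 := Real.sqrt_ne_zero'.2 (by linarith)
    field_simp
  rw [h5] at h4
  exact h4.hasDerivWithinAt

theorem phi_inj (t : ℝ) : InjOn (fun u => Real.sqrt (u ^ 2 - t ^ 2)) (Ioi |t|) := by
  have : StrictMonoOn (fun u => Real.sqrt (u ^ 2 - t ^ 2)) (Ioi |t|) := by
    intro a ha b hb hab
    have ha0 : 0 ≤ a := le_trans (abs_nonneg t) (le_of_lt ha)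
    apply Real.sqrt_lt_sqrt
    · have : t ^ 2 ≤ a ^ 2 := by
        rw [← sq_abs t]; exact pow_le_pow_left₀ (abs_nonneg t) (le_of_lt ha) 2
      linarith
    · have : a ^ 2 < b ^ 2 := pow_lt_pow_left₀ hab ha0 two_ne_zero
      linarith
  exact this.injOn

theorem cov1_integral (t : ℝ) (G : ℝ → ℝ) :
    ∫ ρ in Ioi (0 : ℝ), G ρ =
      ∫ u in Ioi |t|, (u / Real.sqrt (u ^ 2 - t ^ 2)) * G (Real.sqrt (u ^ 2 - t ^ 2)) := by
  rw [← phi_image t,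
    integral_image_eq_integral_abs_deriv_smul measurableSet_Ioi (fun u hu => phi_deriv t hu)
      (phi_inj t) G]
  refine setIntegral_congr_fun measurableSet_Ioi fun u hu => ?_
  have h1 : t ^ 2 < u ^ 2 := by
    rw [← sq_abs t]
    exact pow_lt_pow_left₀ hu (abs_nonneg t) two_ne_zero
  have h2 : 0 < Real.sqrt (u ^ 2 - t ^ 2) := Real.sqrt_pos.2 (by linarith)
  have hu0 : 0 < u := lt_of_le_of_lt (abs_nonneg t) hu
  rw [smul_eq_mul, abs_of_pos (div_pos hu0 h2)]

theorem cov1_lintegral (t : ℝ) (G : ℝ → ENNReal) :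
    ∫⁻ ρ in Ioi (0 : ℝ), G ρ =
      ∫⁻ u in Ioi |t|, ENNReal.ofReal (u / Real.sqrt (u ^ 2 - t ^ 2)) *
        G (Real.sqrt (u ^ 2 - t ^ 2)) := by
  rw [← phi_image t]
  calc ∫⁻ ρ in (fun u => Real.sqrt (u ^ 2 - t ^ 2)) '' Ioi |t|, G ρ
      = ∫⁻ u in Ioi |t|, ENNReal.ofReal |u / Real.sqrt (u ^ 2 - t ^ 2)| *
          G (Real.sqrt (u ^ 2 - t ^ 2)) := by
        simpa only [ContinuousLinearMap.det_toSpanSingleton] using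
          lintegral_image_eq_lintegral_abs_det_fderiv_mul volume measurableSet_Ioi
            (fun u hu => (phi_deriv t hu).hasFDerivWithinAt) (phi_inj t) G
    _ = _ := by
        refine setLIntegral_congr_fun measurableSet_Ioi
          (fun u hu => ?_)
        have h1 : t ^ 2 < u ^ 2 := by
          rw [← sq_abs t]
          exact pow_lt_pow_left₀ hu (abs_nonneg t) two_ne_zero
        have h2 : 0 < Real.sqrt (u ^ 2 - t ^ 2) := Real.sqrt_pos.2 (by linarith)
        have hu0 : 0 < u := lt_of_le_of_lt (abs_nonneg t) hu
        rw [abs_of_pos (div_pos hu0 h2)]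

noncomputable def m3 : EuclideanSpace ℝ (Fin 3) ≃ᵐ ℝ × (ℝ × ℝ) :=
  (MeasurableEquiv.toLp 2 (Fin 3 → ℝ)).symm.trans
    ((MeasurableEquiv.piFinSuccAbove (fun _ : Fin 3 => ℝ) 0).trans
      ((MeasurableEquiv.refl ℝ).prodCongr (MeasurableEquiv.finTwoArrow)))

theorem m3_measurePreserving : MeasurePreserving m3 volume volume := by
  have h1 := EuclideanSpace.volume_preserving_symm_measurableEquiv_toLp (Fin 3)
  have h2 := volume_preserving_piFinSuccAbove (fun _ : Fin 3 => ℝ) 0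
  have h3 := (MeasurePreserving.id (volume : Measure ℝ)).prod (volume_preserving_finTwoArrow ℝ)
  exact (h3.comp h2).comp h1

theorem m3_symm_apply (p : ℝ × ℝ × ℝ) (i : Fin 3) :
    (m3.symm p) i = ![p.1, p.2.1, p.2.2] i := by
  obtain ⟨t, w1, w2⟩ := p
  fin_cases i <;> rfl

theorem polar_sq (p : ℝ × ℝ) :
    ((polarCoord.symm p).1) ^ 2 + ((polarCoord.symm p).2) ^ 2 = p.1 ^ 2 := by
  simp only [polarCoord_symm_apply]
  linear_combination p.1 ^ 2 * (sin_sq_add_cos_sq p.2)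

end GaussRadial

open GaussRadial

/-- Corollary 1 (Appendix D): reduction of the three-dimensional Gaussian diffusion
update of a radially symmetric profile `g` to a one-dimensional radial integral. -/
theorem gaussian_update_radial_reduction
    (D Δt r : ℝ) (hD : 0 < D) (hΔt : 0 < Δt) (hr : 0 < r)
    (x : EuclideanSpace ℝ (Fin 3)) (hx : ‖x‖ = r)
    (g : ℝ → ℝ) (hg : Measurable g)
    (hint : Integrable (fun y : EuclideanSpace ℝ (Fin 3) =>
      g ‖y‖ * Real.exp (-‖x - y‖ ^ 2 / (4 * D * Δt)))) :
    (4 * π * D * Δt) ^ (-(3 : ℝ) / 2) *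
        ∫ y : EuclideanSpace ℝ (Fin 3),
          g ‖y‖ * Real.exp (-‖x - y‖ ^ 2 / (4 * D * Δt)) =
      (4 * π * D * Δt) ^ (-(1 : ℝ) / 2) *
        ∫ r' in Set.Ioi (0 : ℝ),
          g r' * (2 * r' / r) * Real.exp (-(r' ^ 2 + r ^ 2) / (4 * D * Δt)) *
            Real.sinh (r * r' / (2 * D * Δt)) := by
  set c : ℝ := 4 * D * Δt with hc_def
  have hc : 0 < c := by positivity
  -- orthonormal basis adapted to x
  have hru : ‖(r⁻¹ • x : EuclideanSpace ℝ (Fin 3))‖ = 1 := by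
    rw [norm_smul, hx, norm_inv, Real.norm_eq_abs, abs_of_pos hr, inv_mul_cancel₀ hr.ne']
  obtain ⟨b, hb⟩ : ∃ b : OrthonormalBasis (Fin 3) ℝ (EuclideanSpace ℝ (Fin 3)),
      b 0 = r⁻¹ • x := by
    have hortho : Orthonormal ℝ (({0} : Set (Fin 3)).restrict
        (fun _ : Fin 3 => (r⁻¹ • x : EuclideanSpace ℝ (Fin 3)))) := by
      constructor
      · intro i; exact hru
      · intro i j hij
        exact absurd (Subsingleton.elim i j) hij
    obtain ⟨b, hb⟩ := hortho.exists_orthonormalBasis_extension_of_card_eq (by simp)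
    exact ⟨b, hb 0 rfl⟩
  have hxb : b.repr x = r • EuclideanSpace.single 0 (1 : ℝ) := by
    have hx0 : x = r • b 0 := by
      rw [hb, smul_smul, mul_inv_cancel₀ hr.ne', one_smul]
    rw [hx0, _root_.map_smul, b.repr_self]
  -- the composite coordinate map
  set Ψ : ℝ × ℝ × ℝ → EuclideanSpace ℝ (Fin 3) := fun p => b.repr.symm (m3.symm p) with hΨ_def
  have hΨmp : MeasurePreserving Ψ volume volume :=
    b.measurePreserving_repr_symm.comp (m3_measurePreserving.symm m3)
  have hΨemb : MeasurableEmbedding Ψ :=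
    (b.repr.symm.toHomeomorph.measurableEmbedding).comp m3.symm.measurableEmbedding
  set f : EuclideanSpace ℝ (Fin 3) → ℝ :=
    fun y => g ‖y‖ * Real.exp (-‖x - y‖ ^ 2 / c) with hf_def
  set f₂ : ℝ × ℝ × ℝ → ℝ := fun p =>
    g (Real.sqrt (p.1 ^ 2 + (p.2.1 ^ 2 + p.2.2 ^ 2))) *
      Real.exp (-((p.1 - r) ^ 2 + (p.2.1 ^ 2 + p.2.2 ^ 2)) / c) with hf₂_def
  have hΨnorm : ∀ p : ℝ × ℝ × ℝ,
      ‖Ψ p‖ = Real.sqrt (p.1 ^ 2 + (p.2.1 ^ 2 + p.2.2 ^ 2)) := by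
    intro p
    rw [hΨ_def]
    simp only []
    rw [b.repr.symm.norm_map, EuclideanSpace.norm_eq]
    congr 1
    rw [Fin.sum_univ_three]
    simp only [m3_symm_apply, Matrix.cons_val_zero, Matrix.cons_val_one, Matrix.head_cons,
      Matrix.cons_val_two, Matrix.tail_cons, Real.norm_eq_abs, sq_abs]
    ring
  have hΨdist : ∀ p : ℝ × ℝ × ℝ,
      ‖x - Ψ p‖ ^ 2 = (p.1 - r) ^ 2 + (p.2.1 ^ 2 + p.2.2 ^ 2) := by
    intro p
    have hsub : x - Ψ p = b.repr.symm (r • EuclideanSpace.single 0 (1 : ℝ) - m3.symm p) := by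
      rw [map_sub, ← hxb, b.repr.symm_apply_apply]
    rw [hsub, b.repr.symm.norm_map, EuclideanSpace.norm_eq,
      Real.sq_sqrt (by positivity)]
    rw [Fin.sum_univ_three]
    simp only [PiLp.sub_apply, PiLp.smul_apply, EuclideanSpace.single_apply, smul_eq_mul,
      m3_symm_apply, Matrix.cons_val_zero, Matrix.cons_val_one, Matrix.head_cons,
      Matrix.cons_val_two, Matrix.tail_cons, Real.norm_eq_abs, sq_abs]
    norm_num
    simp only [if_neg (show ¬((2 : Fin 3) = 0) by decide)]
    ring
  have hkey : ∀ p : ℝ × ℝ × ℝ, f (Ψ p) = f₂ p := by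
    intro p
    rw [hf_def, hf₂_def]
    simp only []
    rw [hΨnorm p, hΨdist p]
  -- integrability of f₂
  have hint' : Integrable f := hint
  have hf₂int : Integrable f₂ := by
    have := (hΨmp.integrable_comp_emb hΨemb (g := f)).2 hint'
    exact this.congr (Filter.Eventually.of_forall fun p => hkey p)
  -- the one-dimensional pieces
  set K0 : ℝ × ℝ → ℝ := fun q =>
    q.2 * (g q.2 * (Real.exp (-(r ^ 2 + q.2 ^ 2) / c) * Real.exp (2 * r * q.1 / c))) with hK0_def
  set S : Set (ℝ × ℝ) := {q | |q.1| < q.2} with hS_def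
  set K : ℝ × ℝ → ℝ := S.indicator K0 with hK_def
  set FF : ℝ → ℝ → ℝ := fun t ρ =>
    ρ * (g (Real.sqrt (t ^ 2 + ρ ^ 2)) * Real.exp (-((t - r) ^ 2 + ρ ^ 2) / c)) with hFF_def
  have hexp_split : ∀ t u : ℝ, Real.exp (-((t - r) ^ 2 + (u ^ 2 - t ^ 2)) / c) =
      Real.exp (-(r ^ 2 + u ^ 2) / c) * Real.exp (2 * r * t / c) := by
    intro t u
    rw [← Real.exp_add]
    congr 1
    field_simp
    ring
  have hpt : ∀ t u : ℝ, u ∈ Ioi |t| →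
      (u / Real.sqrt (u ^ 2 - t ^ 2)) * FF t (Real.sqrt (u ^ 2 - t ^ 2)) = K0 (t, u) := by
    intro t u hu
    have h1 : t ^ 2 < u ^ 2 := by
      rw [← sq_abs t]; exact pow_lt_pow_left₀ hu (abs_nonneg t) two_ne_zero
    have hu0 : 0 < u := lt_of_le_of_lt (abs_nonneg t) hu
    have hs : 0 < Real.sqrt (u ^ 2 - t ^ 2) := Real.sqrt_pos.2 (by linarith)
    rw [hFF_def, hK0_def]
    simp only []
    rw [Real.sq_sqrt (by linarith : (0:ℝ) ≤ u ^ 2 - t ^ 2),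
      show t ^ 2 + (u ^ 2 - t ^ 2) = u ^ 2 from by ring, Real.sqrt_sq hu0.le, hexp_split t u]
    field_simp
  -- inner Bochner-integral reduction, for every t
  have hinner : ∀ t : ℝ,
      (∫ w : ℝ × ℝ, f₂ (t, w)) = (∫ u in Ioi |t|, K0 (t, u)) * (2 * π) := by
    intro t
    have h1 : (∫ w : ℝ × ℝ, f₂ (t, w)) =
        ∫ p in polarCoord.target, p.1 • f₂ (t, polarCoord.symm p) :=
      (integral_comp_polarCoord_symm fun w => f₂ (t, w)).symm
    have h2 : ∀ p : ℝ × ℝ, p.1 • f₂ (t, polarCoord.symm p)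
        = FF t p.1 * (fun _ : ℝ => (1 : ℝ)) p.2 := by
      intro p
      rw [hf₂_def, hFF_def]
      simp only [smul_eq_mul, mul_one]
      rw [polar_sq p]
    have h3 : (∫ p in polarCoord.target, p.1 • f₂ (t, polarCoord.symm p))
        = (∫ ρ in Ioi (0:ℝ), FF t ρ) * (∫ θ in Ioo (-π) π, (1:ℝ)) := by
      rw [polarCoord_target]
      calc ∫ p in Ioi (0:ℝ) ×ˢ Ioo (-π) π, p.1 • f₂ (t, polarCoord.symm p)
          = ∫ p in Ioi (0:ℝ) ×ˢ Ioo (-π) π, FF t p.1 * (fun _ : ℝ => (1:ℝ)) p.2 :=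
            setIntegral_congr_fun (measurableSet_Ioi.prod measurableSet_Ioo) fun p _ => h2 p
        _ = _ := by
            rw [Measure.volume_eq_prod, ← Measure.prod_restrict]
            exact integral_prod_mul (FF t) (fun _ : ℝ => (1 : ℝ))
    have h4 : (∫ θ in Ioo (-π : ℝ) π, (1:ℝ)) = 2 * π := by
      rw [setIntegral_const, smul_eq_mul, mul_one,
        Real.volume_real_Ioo_of_le (by linarith [Real.pi_pos])]
      ring
    rw [h1, h3, h4, cov1_integral t (FF t)]
    congr 1
    exact setIntegral_congr_fun measurableSet_Ioi fun u hu => hpt t u hu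
  -- measurability facts
  have hsqm : ∀ t : ℝ, Measurable fun ρ : ℝ => Real.sqrt (t ^ 2 + ρ ^ 2) := fun t =>
    Real.continuous_sqrt.measurable.comp (measurable_const.add (measurable_id.pow_const 2))
  have hexpm : ∀ t : ℝ, Measurable fun ρ : ℝ => Real.exp (-((t - r) ^ 2 + ρ ^ 2) / c) := fun t =>
    Real.measurable_exp.comp
      (((measurable_const.add (measurable_id.pow_const 2)).neg).div_const c)
  have hK0m : Measurable K0 := by
    rw [hK0_def]
    exact measurable_snd.mul ((hg.comp measurable_snd).mul
      ((Real.measurable_exp.comp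
        (((measurable_const.add (measurable_snd.pow_const 2)).neg).div_const c)).mul
      (Real.measurable_exp.comp ((measurable_fst.const_mul (2 * r)).div_const c))))
  have hSm : MeasurableSet S := measurableSet_lt measurable_fst.abs measurable_snd
  have hKm : Measurable K := hK0m.indicator hSm
  have hf₂m : Measurable f₂ := by
    rw [hf₂_def]
    refine (hg.comp ?_).mul (Real.measurable_exp.comp ?_)
    · exact Real.continuous_sqrt.measurable.comp
        ((measurable_fst.pow_const 2).add
          (((measurable_snd.fst).pow_const 2).add ((measurable_snd.snd).pow_const 2)))
    · exact (((measurable_fst.sub measurable_const).pow_const 2).add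
        (((measurable_snd.fst).pow_const 2).add ((measurable_snd.snd).pow_const 2))).neg.div_const c
  -- inner lintegral reduction, for every t
  set HH : ℝ → ℝ → ENNReal := fun t ρ => ENNReal.ofReal ρ *
    (‖g (Real.sqrt (t ^ 2 + ρ ^ 2)) * Real.exp (-((t - r) ^ 2 + ρ ^ 2) / c)‖₊ : ENNReal)
    with hHH_def
  have hHHm : ∀ t : ℝ, Measurable (HH t) := fun t =>
    ENNReal.measurable_ofReal.mul (((hg.comp (hsqm t)).mul (hexpm t)).nnnorm.coe_nnreal_ennreal)
  have hKnorm : ∀ t u : ℝ, ((‖K (t, u)‖₊ : ENNReal))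
      = (Ioi |t|).indicator (fun u => (‖K0 (t, u)‖₊ : ENNReal)) u := by
    intro t u
    rw [hK_def]
    by_cases hm : |t| < u
    · rw [Set.indicator_of_mem (show (t, u) ∈ S from hm),
        Set.indicator_of_mem (mem_Ioi.2 hm)]
    · rw [Set.indicator_of_notMem (show (t, u) ∉ S from hm),
        Set.indicator_of_notMem (fun hmem => hm (mem_Ioi.1 hmem))]
      simp
  have hlinner : ∀ t : ℝ, (∫⁻ w : ℝ × ℝ, (‖f₂ (t, w)‖₊ : ENNReal))
      = ENNReal.ofReal (2 * π) * ∫⁻ u, (‖K (t, u)‖₊ : ENNReal) := by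
    intro t
    have h1 : (∫⁻ w : ℝ × ℝ, (‖f₂ (t, w)‖₊ : ENNReal)) =
        ∫⁻ p in polarCoord.target, ENNReal.ofReal p.1 * (‖f₂ (t, polarCoord.symm p)‖₊ : ENNReal) :=
      (GaussRadial.lintegral_comp_polarCoord_symm fun w => (‖f₂ (t, w)‖₊ : ENNReal)).symm
    have h2 : ∀ p : ℝ × ℝ, ENNReal.ofReal p.1 * (‖f₂ (t, polarCoord.symm p)‖₊ : ENNReal)
        = HH t p.1 * (fun _ : ℝ => (1 : ENNReal)) p.2 := by
      intro p
      rw [hf₂_def, hHH_def]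
      simp only [mul_one]
      rw [polar_sq p]
    have h3 : (∫⁻ p in polarCoord.target,
          ENNReal.ofReal p.1 * (‖f₂ (t, polarCoord.symm p)‖₊ : ENNReal))
        = (∫⁻ ρ in Ioi (0:ℝ), HH t ρ) * ENNReal.ofReal (2 * π) := by
      rw [polarCoord_target]
      calc ∫⁻ p in Ioi (0:ℝ) ×ˢ Ioo (-π) π,
            ENNReal.ofReal p.1 * (‖f₂ (t, polarCoord.symm p)‖₊ : ENNReal)
          = ∫⁻ p in Ioi (0:ℝ) ×ˢ Ioo (-π) π, HH t p.1 * (fun _ : ℝ => (1 : ENNReal)) p.2 :=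
            setLIntegral_congr_fun (measurableSet_Ioi.prod measurableSet_Ioo)
              (fun p _ => h2 p)
        _ = (∫⁻ ρ in Ioi (0:ℝ), HH t ρ) * (∫⁻ _ in Ioo (-π:ℝ) π, (1 : ENNReal)) := by
            rw [Measure.volume_eq_prod, ← Measure.prod_restrict]
            exact lintegral_prod_mul (hHHm t).aemeasurable measurable_one.aemeasurable
        _ = _ := by
            rw [setLIntegral_one, Real.volume_Ioo,
              show π - -π = 2 * π from by ring]
    have h4 : (∫⁻ ρ in Ioi (0:ℝ), HH t ρ) = ∫⁻ u, (‖K (t, u)‖₊ : ENNReal) := by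
      rw [cov1_lintegral t (HH t)]
      have h5 : ∀ u, u ∈ Ioi |t| →
          ENNReal.ofReal (u / Real.sqrt (u ^ 2 - t ^ 2)) * HH t (Real.sqrt (u ^ 2 - t ^ 2))
          = (‖K0 (t, u)‖₊ : ENNReal) := by
        intro u hu
        have h1' : t ^ 2 < u ^ 2 := by
          rw [← sq_abs t]; exact pow_lt_pow_left₀ hu (abs_nonneg t) two_ne_zero
        have hu0 : 0 < u := lt_of_le_of_lt (abs_nonneg t) hu
        have hs : 0 < Real.sqrt (u ^ 2 - t ^ 2) := Real.sqrt_pos.2 (by linarith)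
        rw [hHH_def]
        simp only []
        rw [Real.sq_sqrt (by linarith : (0:ℝ) ≤ u ^ 2 - t ^ 2),
          show t ^ 2 + (u ^ 2 - t ^ 2) = u ^ 2 from by ring, Real.sqrt_sq hu0.le,
          hexp_split t u, hK0_def]
        simp only []
        rw [← mul_assoc, ← ENNReal.ofReal_mul (by positivity), div_mul_cancel₀ _ hs.ne']
        conv_rhs => rw [nnnorm_mul, ENNReal.coe_mul,
          show (‖u‖₊ : ENNReal) = ENNReal.ofReal u from Real.enorm_eq_ofReal hu0.le]
      calc ∫⁻ u in Ioi |t|, ENNReal.ofReal (u / Real.sqrt (u ^ 2 - t ^ 2)) *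
            HH t (Real.sqrt (u ^ 2 - t ^ 2))
          = ∫⁻ u in Ioi |t|, (‖K0 (t, u)‖₊ : ENNReal) :=
            setLIntegral_congr_fun measurableSet_Ioi
              (fun u hu => h5 u hu)
        _ = ∫⁻ u, (Ioi |t|).indicator (fun u => (‖K0 (t, u)‖₊ : ENNReal)) u :=
            (lintegral_indicator measurableSet_Ioi _).symm
        _ = _ := lintegral_congr fun u => (hKnorm t u).symm
    rw [h1, h3, h4, mul_comm]
  -- integrability of K
  have hKint : Integrable K := by
    have hf2fin : (∫⁻ q, (‖f₂ q‖₊ : ENNReal)) < ⊤ := hf₂int.2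
    have hchain : (∫⁻ q, (‖f₂ q‖₊ : ENNReal))
        = ENNReal.ofReal (2 * π) * ∫⁻ q : ℝ × ℝ, (‖K q‖₊ : ENNReal) := by
      rw [Measure.volume_eq_prod, lintegral_prod _ hf₂m.nnnorm.coe_nnreal_ennreal.aemeasurable]
      calc ∫⁻ t, ∫⁻ w, (‖f₂ (t, w)‖₊ : ENNReal)
          = ∫⁻ t, ENNReal.ofReal (2 * π) * ∫⁻ u, (‖K (t, u)‖₊ : ENNReal) :=
            lintegral_congr fun t => hlinner t
        _ = ENNReal.ofReal (2 * π) * ∫⁻ t, ∫⁻ u, (‖K (t, u)‖₊ : ENNReal) :=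
            lintegral_const_mul' _ _ ENNReal.ofReal_ne_top
        _ = _ := by
            rw [← lintegral_prod _ hKm.nnnorm.coe_nnreal_ennreal.aemeasurable, ← Measure.volume_eq_prod]
    rw [hchain] at hf2fin
    refine ⟨hKm.aestronglyMeasurable, ?_⟩
    by_contra htop
    rw [HasFiniteIntegral, not_lt, top_le_iff] at htop
    change (∫⁻ q, (‖K q‖₊ : ENNReal)) = ⊤ at htop
    rw [htop, ENNReal.mul_top (ENNReal.ofReal_pos.2 (by positivity)).ne'] at hf2fin
    exact absurd hf2fin (lt_irrefl ⊤)
  -- evaluation of the t-integral for u > 0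
  have hueval : ∀ u : ℝ, u ∈ Ioi (0:ℝ) → (∫ t : ℝ, K (t, u)) =
      (c / 2) * (g u * (2 * u / r) * Real.exp (-(u ^ 2 + r ^ 2) / c) *
        Real.sinh (r * u / (2 * D * Δt))) := by
    intro u hu
    have hu0 : 0 < u := hu
    have hKslice : (fun t => K (t, u)) = (Ioo (-u) u).indicator (fun t => K0 (t, u)) := by
      funext t
      rw [hK_def]
      by_cases hm : |t| < u
      · rw [Set.indicator_of_mem (show (t, u) ∈ S from hm),
          Set.indicator_of_mem (by rw [mem_Ioo, ← abs_lt]; exact hm)]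
      · rw [Set.indicator_of_notMem (show (t, u) ∉ S from hm),
          Set.indicator_of_notMem (by rw [mem_Ioo, ← abs_lt]; exact hm)]
    have hI : (∫ t in Ioo (-u) u, Real.exp (2 * r / c * t))
        = (2 * r / c)⁻¹ * (Real.exp (2 * r / c * u) - Real.exp (2 * r / c * (-u))) := by
      rw [← integral_Ioc_eq_integral_Ioo,
        ← intervalIntegral.integral_of_le (by linarith : -u ≤ u),
        intervalIntegral.integral_comp_mul_left (fun t => Real.exp t)
          (by positivity : (2 * r / c) ≠ 0),
        integral_exp, smul_eq_mul]
    calc ∫ t : ℝ, K (t, u)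
        = ∫ t in Ioo (-u) u, K0 (t, u) := by
          rw [hKslice, integral_indicator measurableSet_Ioo]
      _ = ∫ t in Ioo (-u) u, (u * (g u * Real.exp (-(r ^ 2 + u ^ 2) / c))) *
            Real.exp (2 * r / c * t) := by
          refine setIntegral_congr_fun measurableSet_Ioo fun t _ => ?_
          rw [hK0_def]
          simp only []
          rw [show 2 * r * t / c = 2 * r / c * t from by ring]
          ring
      _ = (u * (g u * Real.exp (-(r ^ 2 + u ^ 2) / c))) *
            ∫ t in Ioo (-u) u, Real.exp (2 * r / c * t) := integral_const_mul _ _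
      _ = _ := by
          rw [hI, Real.sinh_eq,
            show r * u / (2 * D * Δt) = 2 * r / c * u from by rw [hc_def]; field_simp; ring,
            show 2 * r / c * (-u) = -(2 * r / c * u) from by ring,
            show -(u ^ 2 + r ^ 2) / c = -(r ^ 2 + u ^ 2) / c from by ring]
          have hrc : (2 * r / c) ≠ 0 := by positivity
          field_simp
  -- main computation
  have hmain : (∫ y, f y) = ((c / 2) * ∫ r' in Ioi (0:ℝ),
      g r' * (2 * r' / r) * Real.exp (-(r' ^ 2 + r ^ 2) / c) *
        Real.sinh (r * r' / (2 * D * Δt))) * (2 * π) := by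
    calc ∫ y, f y
        = ∫ p, f₂ p := by
          rw [← hΨmp.integral_comp hΨemb f]
          exact integral_congr_ae (Filter.Eventually.of_forall fun p => hkey p)
      _ = ∫ t, ∫ w : ℝ × ℝ, f₂ (t, w) := by
          have h := integral_prod f₂ (by rwa [← Measure.volume_eq_prod] : Integrable f₂ _)
          rwa [← Measure.volume_eq_prod] at h
      _ = ∫ t, (∫ u in Ioi |t|, K0 (t, u)) * (2 * π) :=
          integral_congr_ae (Filter.Eventually.of_forall fun t => hinner t)
      _ = (∫ t, ∫ u in Ioi |t|, K0 (t, u)) * (2 * π) := integral_mul_const _ _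
      _ = (∫ t, ∫ u, K (t, u)) * (2 * π) := by
          congr 1
          refine integral_congr_ae (Filter.Eventually.of_forall fun t => ?_)
          show (∫ u in Ioi |t|, K0 (t, u)) = ∫ u, K (t, u)
          have hpt' : ∀ u, K (t, u) = (Ioi |t|).indicator (fun u => K0 (t, u)) u := by
            intro u
            rw [hK_def]
            by_cases hm : |t| < u
            · rw [Set.indicator_of_mem (show (t, u) ∈ S from hm),
                Set.indicator_of_mem (mem_Ioi.2 hm)]
            · rw [Set.indicator_of_notMem (show (t, u) ∉ S from hm),
                Set.indicator_of_notMem (fun hmem => hm (mem_Ioi.1 hmem))]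
          rw [← integral_indicator measurableSet_Ioi]
          exact integral_congr_ae (Filter.Eventually.of_forall fun u => (hpt' u).symm)
      _ = (∫ u, ∫ t, K (t, u)) * (2 * π) := by
          congr 1
          refine integral_integral_swap ?_
          have huncurry : Function.uncurry (fun t u => K (t, u)) = K := by
            funext q
            simp [Function.uncurry]
          rw [huncurry]
          rwa [← Measure.volume_eq_prod]
      _ = (∫ u in Ioi 0, ∫ t, K (t, u)) * (2 * π) := by
          congr 1
          rw [← integral_indicator measurableSet_Ioi]
          refine integral_congr_ae (Filter.Eventually.of_forall fun u => ?_)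
          show (∫ t, K (t, u)) = (Ioi 0).indicator (fun u => ∫ t, K (t, u)) u
          by_cases hu : u ∈ Ioi (0:ℝ)
          · rw [Set.indicator_of_mem hu]
          · rw [Set.indicator_of_notMem hu]
            have hz : ∀ t : ℝ, K (t, u) = 0 := by
              intro t
              rw [hK_def]
              refine Set.indicator_of_notMem ?_ _
              exact fun h => hu (mem_Ioi.2 (lt_of_le_of_lt (abs_nonneg t) h))
            simp [hz]
      _ = (∫ u in Ioi 0, (c / 2) * (g u * (2 * u / r) * Real.exp (-(u ^ 2 + r ^ 2) / c) *
            Real.sinh (r * u / (2 * D * Δt)))) * (2 * π) := by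
          congr 1
          exact setIntegral_congr_fun measurableSet_Ioi fun u hu => hueval u hu
      _ = _ := by rw [integral_const_mul]
  rw [hmain]
  have hB : (0:ℝ) < 4 * π * D * Δt := by positivity
  have hpow : (4 * π * D * Δt) ^ (-(3:ℝ)/2) * (4 * π * D * Δt)
      = (4 * π * D * Δt) ^ (-(1:ℝ)/2) := by
    calc (4 * π * D * Δt) ^ (-(3:ℝ)/2) * (4 * π * D * Δt)
        = (4 * π * D * Δt) ^ (-(3:ℝ)/2) * (4 * π * D * Δt) ^ (1:ℝ) := by
          rw [Real.rpow_one]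
      _ = (4 * π * D * Δt) ^ (-(3:ℝ)/2 + 1) := (Real.rpow_add hB _ _).symm
      _ = _ := by norm_num
  set J := ∫ r' in Ioi (0:ℝ),
      g r' * (2 * r' / r) * Real.exp (-(r' ^ 2 + r ^ 2) / c) *
        Real.sinh (r * r' / (2 * D * Δt)) with hJ_def
  have hCJ : ((c / 2) * J) * (2 * π) = (4 * π * D * Δt) * J := by
    rw [hc_def]; ring
  rw [hCJ, ← mul_assoc, hpow]
end
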